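/- The regular dodecahedron is not a rational polytope: where φ = (1+√5)/2, there do not exist a basis (v₁, v₂, v₃) of ℝ³ and nonzero real numbers c₁, …, c₆ such that the six vectors c₁(0,1,φ), c₂(0,1,−φ), c₃(1,φ,0), c₄(1,−φ,0), c₅(φ,0,1), c₆(φ,0,−1) all belong to the lattice ℤv₁ + ℤv₂ + ℤv₃. -/

import Mathlib

/-! For vectors of a lattice `ℤv₁ + ℤv₂ + ℤv₃`, every determinant `[x y z]` is an integer
multiple of `[v₁ v₂ v₃] ≠ 0`, so a quotient of two products of such determinants is rational.
If every vector occurs equally often in numerator and denominator, the quotient does not change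
when the vectors are rescaled. For the normals `n₀, n₁, n₃, n₄, n₅` of the dodecahedron, the
cross-ratio `[n₀ n₁ n₄][n₀ n₃ n₅] / ([n₀ n₁ n₅][n₀ n₃ n₄])` of four facet directions seen
from `n₀` equals the irrational number `φ`. -/

/-- The golden ratio `φ = (1+√5)/2`. -/
noncomputable def gold : ℝ := (1 + Real.sqrt 5) / 2

/-- The six directions (up to sign) of the facet normals of the regular dodecahedron. -/
noncomputable def dodecNormals : Fin 6 → (Fin 3 → ℝ) :=
  ![![0, 1, gold], ![0, 1, -gold], ![1, gold, 0], ![1, -gold, 0],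
    ![gold, 0, 1], ![gold, 0, -1]]

open Matrix Submodule

namespace Matrix

variable {ι : Type*} [Fintype ι] [DecidableEq ι]

theorem exists_int_det_eq_mul_det_of_mem_span {V W : Matrix ι ι ℝ}
    (hW : ∀ i, W i ∈ span ℤ (Set.range V)) : ∃ m : ℤ, W.det = m * V.det := by
  choose A hA using fun i => (mem_span_range_iff_exists_fun ℤ).mp (hW i)
  refine ⟨(of A).det, ?_⟩
  have hWA : W = (of A).map (Int.cast : ℤ → ℝ) * V := by
    ext i k
    simp [← hA i, mul_apply, Finset.sum_apply]
  rw [hWA, det_mul, Int.cast_det]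

theorem not_irrational_of_det_mul_det_eq {V W₁ W₂ W₃ W₄ : Matrix ι ι ℝ} (hV : V.det ≠ 0)
    (h₁ : ∀ i, W₁ i ∈ span ℤ (Set.range V)) (h₂ : ∀ i, W₂ i ∈ span ℤ (Set.range V))
    (h₃ : ∀ i, W₃ i ∈ span ℤ (Set.range V)) (h₄ : ∀ i, W₄ i ∈ span ℤ (Set.range V))
    (hW : W₃.det * W₄.det ≠ 0) {r : ℝ} (hr : W₁.det * W₂.det = r * (W₃.det * W₄.det)) :
    ¬ Irrational r := by
  obtain ⟨m₁, hm₁⟩ := exists_int_det_eq_mul_det_of_mem_span h₁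
  obtain ⟨m₂, hm₂⟩ := exists_int_det_eq_mul_det_of_mem_span h₂
  obtain ⟨m₃, hm₃⟩ := exists_int_det_eq_mul_det_of_mem_span h₃
  obtain ⟨m₄, hm₄⟩ := exists_int_det_eq_mul_det_of_mem_span h₄
  rw [hm₁, hm₂, hm₃, hm₄] at hr
  rw [hm₃, hm₄] at hW
  have hm : ((m₃ * m₄ : ℤ) : ℝ) ≠ 0 := by
    push_cast
    contrapose! hW
    linear_combination V.det ^ 2 * hW
  have hr' : r = ((m₁ * m₂ : ℤ) : ℝ) / ((m₃ * m₄ : ℤ) : ℝ) := by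
    rw [eq_div_iff hm]
    apply mul_right_cancel₀ (pow_ne_zero 2 hV)
    push_cast
    linear_combination -hr
  exact fun h => h ⟨(m₁ * m₂ : ℤ) / (m₃ * m₄ : ℤ), by push_cast [hr']; rfl⟩

theorem det_of_comp_smul {R κ : Type*} [CommRing R] (c : κ → R) (x : κ → ι → R) (s : ι → κ) :
    (of ((c • x) ∘ s)).det = (∏ i, c (s i)) * (of (x ∘ s)).det :=
  det_mul_column (c ∘ s) (of (x ∘ s))

end Matrix

theorem gold_sq : gold ^ 2 = gold + 1 := Real.goldenRatio_sq

theorem det_dodecNormals_015 : (of (dodecNormals ∘ ![0, 1, 5])).det = -2 * gold ^ 2 := by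
  simp only [det_fin_three, dodecNormals, of_apply, Function.comp_apply, cons_val]
  ring

theorem det_dodecNormals_034 : (of (dodecNormals ∘ ![0, 3, 4])).det = 2 * gold := by
  simp only [det_fin_three, dodecNormals, of_apply, Function.comp_apply, cons_val]
  linear_combination (gold + 1) * gold_sq

theorem dodecNormals_cross_ratio :
    (of (dodecNormals ∘ ![0, 1, 4])).det * (of (dodecNormals ∘ ![0, 3, 5])).det =
      gold * ((of (dodecNormals ∘ ![0, 1, 5])).det * (of (dodecNormals ∘ ![0, 3, 4])).det) := by
  simp only [det_fin_three, dodecNormals, of_apply, Function.comp_apply, cons_val]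
  linear_combination 2 * gold ^ 2 * (gold ^ 2 + 1) * gold_sq

/-- The regular dodecahedron is not rational: there is no basis `(v₁, v₂, v₃)` of `ℝ³`
and nonzero reals `c₁, …, c₆` with `cᵢ·nᵢ ∈ ℤv₁ + ℤv₂ + ℤv₃` for each of the six
normal directions `nᵢ`. -/
theorem dodecahedron_not_rational :
    ¬ ∃ (v₁ v₂ v₃ : Fin 3 → ℝ) (c : Fin 6 → ℝ),
        LinearIndependent ℝ ![v₁, v₂, v₃] ∧
        ∀ i : Fin 6, c i ≠ 0 ∧
          ∃ a b d : ℤ,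
            c i • dodecNormals i = (a : ℝ) • v₁ + (b : ℝ) • v₂ + (d : ℝ) • v₃ := by
  rintro ⟨v₁, v₂, v₃, c, hv, hc⟩
  have hV : (of ![v₁, v₂, v₃]).det ≠ 0 :=
    ((isUnit_iff_isUnit_det _).mp (linearIndependent_rows_iff_isUnit.mp hv)).ne_zero
  have hw (s : Fin 3 → Fin 6) (i : Fin 3) :
      of ((c • dodecNormals) ∘ s) i ∈ span ℤ (Set.range ![v₁, v₂, v₃]) := by
    obtain ⟨-, a, b, d, h⟩ := hc (s i)
    have hbasis (k : Fin 3) : ![v₁, v₂, v₃] k ∈ span ℤ (Set.range ![v₁, v₂, v₃]) :=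
      subset_span ⟨k, rfl⟩
    change c (s i) • dodecNormals (s i) ∈ _
    rw [h, Int.cast_smul_eq_zsmul, Int.cast_smul_eq_zsmul, Int.cast_smul_eq_zsmul]
    exact add_mem (add_mem (zsmul_mem (hbasis 0) a) (zsmul_mem (hbasis 1) b))
      (zsmul_mem (hbasis 2) d)
  have hc_ne (i : Fin 6) : c i ≠ 0 := (hc i).1
  have hgold : gold ≠ 0 := Real.goldenRatio_pos.ne'
  refine not_irrational_of_det_mul_det_eq (r := gold) hV (hw ![0, 1, 4])
    (hw ![0, 3, 5]) (hw ![0, 1, 5]) (hw ![0, 3, 4]) ?_ ?_ Real.goldenRatio_irrational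
  · simp [det_of_comp_smul, det_dodecNormals_015, det_dodecNormals_034, Fin.prod_univ_three,
      hc_ne, hgold]
  · simp only [det_of_comp_smul, Fin.prod_univ_three, cons_val_zero, cons_val_one, cons_val_two,
      head_cons, tail_cons]
    linear_combination (c 0 * c 1 * c 4 * (c 0 * c 3 * c 5)) * dodecNormals_cross_ratio
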